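/- arXiv:1504.03196 — 5 statements merged into one kernel-verified Lean document; each statement's English description precedes it below -/
import Mathlib

section
/- Suppose α : ℕ → ℝ≥0 satisfies α(k) ≤ C·exp(γ·k·log(log k)) for all k ≥ 3, with constants C > 0 and 0 < γ < 1. Then the series ∑_{k≥2} (α(k)/(k−2)!)·(1.584·k / log(k+1))^k converges. -/
open Filter Real

/-- `k^k / k! ≤ e^k`. -/
lemma my_pow_div_factorial_le_exp (k : ℕ) :
    (k : ℝ) ^ k / (Nat.factorial k : ℝ) ≤ Real.exp k := by
  have h := Real.sum_le_exp_of_nonneg (x := (k : ℝ)) (by positivity) (k + 1)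
  refine le_trans ?_ h
  exact Finset.single_le_sum (f := fun i => (k : ℝ) ^ i / (Nat.factorial i : ℝ))
    (fun i _ => by positivity) (Finset.self_mem_range_succ k)

/-- Under the growth condition `α(k) ≤ C·exp(γ·k·log log k)` with `0 < γ < 1`,
the series `∑_{k≥2} (α(k)/(k−2)!)·(1.584·k/log(k+1))^k` converges
(index shifted: `k = j + 2`). -/
theorem summable_bell_bound_series (α : ℕ → ℝ) (hα0 : ∀ k, 0 ≤ α k)
    (C γ : ℝ) (hC : 0 < C) (hγ0 : 0 < γ) (hγ1 : γ < 1)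
    (hαb : ∀ k : ℕ, 3 ≤ k → α k ≤ C * Real.exp (γ * k * Real.log (Real.log k))) :
    Summable (fun j : ℕ =>
      α (j + 2) / (Nat.factorial j : ℝ) *
        (1.584 * ((j : ℝ) + 2) / Real.log ((j : ℝ) + 3)) ^ (j + 2)) := by
  -- comparison series
  have hg : Summable (fun j : ℕ => (j : ℝ) ^ 2 * (1/2 : ℝ) ^ j) := by
    have h12 : ‖(1/2 : ℝ)‖ < 1 := by
      rw [Real.norm_eq_abs, abs_of_pos (by norm_num : (0:ℝ) < 1/2)]; norm_num
    simpa using summable_pow_mul_geometric_of_norm_lt_one (R := ℝ) 2 h12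
  refine summable_of_isBigO_nat hg ?_
  rw [Asymptotics.isBigO_iff]
  refine ⟨C, ?_⟩
  -- the small quantity tends to 0
  have hrp : Tendsto (fun x : ℝ => x ^ (γ - 1)) atTop (nhds 0) := by
    have := tendsto_rpow_neg_atTop (y := 1 - γ) (by linarith)
    simpa [neg_sub] using this
  have hlog : Tendsto (fun j : ℕ => Real.log ((j : ℝ) + 2)) atTop atTop :=
    Real.tendsto_log_atTop.comp (tendsto_atTop_add_const_right _ _ tendsto_natCast_atTop_atTop)
  have htend : Tendsto (fun j : ℕ => (Real.log ((j : ℝ) + 2)) ^ (γ - 1)) atTop (nhds 0) :=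
    hrp.comp hlog
  have hepos : (0 : ℝ) < Real.exp 1 * 1.584 := by positivity
  have hε : (0 : ℝ) < 1 / (2 * (Real.exp 1 * 1.584)) := by positivity
  have hev : ∀ᶠ j : ℕ in atTop,
      (Real.log ((j : ℝ) + 2)) ^ (γ - 1) < 1 / (2 * (Real.exp 1 * 1.584)) :=
    htend.eventually (gt_mem_nhds hε)
  filter_upwards [hev, eventually_ge_atTop 2] with j hsm hj2
  -- notation
  set k : ℕ := j + 2 with hk
  have hk3 : 3 ≤ k := by omega
  have hkj : (k : ℝ) = (j : ℝ) + 2 := by rw [hk]; push_cast; ring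
  set L : ℝ := Real.log ((j : ℝ) + 2) with hL
  have hL1 : 1 ≤ L := by
    rw [hL, show (1 : ℝ) = Real.log (Real.exp 1) by simp]
    apply Real.log_le_log (Real.exp_pos 1)
    have he3 : Real.exp 1 ≤ 3 := by have := Real.exp_one_lt_d9; linarith
    have hj3 : (3 : ℝ) ≤ (j : ℝ) + 2 := by
      have : (2 : ℝ) ≤ (j : ℝ) := by exact_mod_cast hj2
      linarith
    linarith
  have hLpos : 0 < L := lt_of_lt_of_le one_pos hL1
  set M : ℝ := Real.log ((j : ℝ) + 3) with hM
  have hLM : L ≤ M := Real.log_le_log (by positivity) (by linarith)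
  have hMpos : 0 < M := lt_of_lt_of_le hLpos hLM
  -- bound α
  have hα : α k ≤ C * Real.exp (γ * k * Real.log L) := by
    have h := hαb k hk3
    rwa [show Real.log (k : ℝ) = L by rw [hkj, hL]] at h
  -- rewrite the exponential
  have hexp : Real.exp (γ * k * Real.log L) = (L ^ γ) ^ k := by
    rw [Real.rpow_def_of_pos hLpos, ← Real.exp_nat_mul]
    ring_nf
  have hLγpos : 0 < L ^ γ := Real.rpow_pos_of_pos hLpos γ
  -- small quantity bound: e * 1.584 * L^γ / M ≤ 1/2
  have hsmall : Real.exp 1 * 1.584 * (L ^ γ) / M ≤ 1 / 2 := by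
    have hdiv : L ^ (γ - 1) = L ^ γ / L := by
      rw [Real.rpow_sub hLpos, Real.rpow_one]
    have h1 : L ^ γ / M ≤ L ^ (γ - 1) := by
      rw [hdiv]
      exact div_le_div_of_nonneg_left hLγpos.le hLpos hLM
    calc Real.exp 1 * 1.584 * (L ^ γ) / M
        = (Real.exp 1 * 1.584) * (L ^ γ / M) := by ring
      _ ≤ (Real.exp 1 * 1.584) * (L ^ (γ - 1)) :=
          mul_le_mul_of_nonneg_left h1 hepos.le
      _ ≤ (Real.exp 1 * 1.584) * (1 / (2 * (Real.exp 1 * 1.584))) :=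
          mul_le_mul_of_nonneg_left hsm.le hepos.le
      _ = 1 / 2 := by
          rw [mul_one_div, div_eq_div_iff (by positivity) (by norm_num : (2:ℝ) ≠ 0)]
          ring
  -- main chain
  have hfact_pos : (0 : ℝ) < (Nat.factorial j : ℝ) := by positivity
  have hTnn : 0 ≤ 1.584 * ((j : ℝ) + 2) / M := by positivity
  have step1 : α k / (Nat.factorial j : ℝ) *
      (1.584 * ((j : ℝ) + 2) / M) ^ k
      ≤ C * (L ^ γ) ^ k / (Nat.factorial j : ℝ) *
        (1.584 * ((j : ℝ) + 2) / M) ^ k := by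
    apply mul_le_mul_of_nonneg_right _ (pow_nonneg hTnn k)
    apply (div_le_div_iff_of_pos_right hfact_pos).mpr
    calc α k ≤ C * Real.exp (γ * k * Real.log L) := hα
      _ = C * (L ^ γ) ^ k := by rw [hexp]
  -- 1/j! ≤ k^2 / k!
  have hfacN : Nat.factorial k ≤ k ^ 2 * Nat.factorial j := by
    rw [hk, Nat.factorial_succ, Nat.factorial_succ]
    have h1 : (j + 1) * Nat.factorial j ≤ (j + 2) * Nat.factorial j :=
      Nat.mul_le_mul_right _ (by omega)
    calc (j + 2) * ((j + 1) * Nat.factorial j)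
        ≤ (j + 2) * ((j + 2) * Nat.factorial j) := Nat.mul_le_mul_left _ h1
      _ = (j + 2) ^ 2 * Nat.factorial j := by ring
  have hfac : (Nat.factorial k : ℝ) ≤ (k : ℝ) ^ 2 * (Nat.factorial j : ℝ) := by
    exact_mod_cast hfacN
  have hkfact_pos : (0 : ℝ) < (Nat.factorial k : ℝ) := by positivity
  have hinvfac : 1 / (Nat.factorial j : ℝ) ≤ (k : ℝ) ^ 2 / (Nat.factorial k : ℝ) := by
    rw [div_le_div_iff₀ hfact_pos hkfact_pos, one_mul]
    exact hfac
  -- combine powers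
  have hcomb : C * (L ^ γ) ^ k / (Nat.factorial j : ℝ) *
      (1.584 * ((j : ℝ) + 2) / M) ^ k
      ≤ C * (k : ℝ) ^ 2 * ((Real.exp 1 * 1.584 * (L ^ γ) / M) ^ k) := by
    have key : (L ^ γ) ^ k * (1.584 * ((j : ℝ) + 2) / M) ^ k
        = (1.584 * (L ^ γ) / M) ^ k * (k : ℝ) ^ k := by
      rw [← mul_pow, ← mul_pow, hkj]
      congr 1
      field_simp
    have hexp1 : Real.exp ((k : ℝ)) = Real.exp 1 ^ k := by
      rw [← Real.exp_nat_mul, mul_one]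
    have hpow_exp : ((k : ℝ)) ^ k / (Nat.factorial k : ℝ) ≤ Real.exp 1 ^ k := by
      have h := my_pow_div_factorial_le_exp k
      rwa [hexp1] at h
    have hA : (0 : ℝ) ≤ (1.584 * (L ^ γ) / M) ^ k := by
      apply pow_nonneg
      positivity
    calc C * (L ^ γ) ^ k / (Nat.factorial j : ℝ) *
        (1.584 * ((j : ℝ) + 2) / M) ^ k
        = C * ((L ^ γ) ^ k * (1.584 * ((j : ℝ) + 2) / M) ^ k) *
          (1 / (Nat.factorial j : ℝ)) := by ring
      _ ≤ C * ((L ^ γ) ^ k * (1.584 * ((j : ℝ) + 2) / M) ^ k) *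
          ((k : ℝ) ^ 2 / (Nat.factorial k : ℝ)) := by
          apply mul_le_mul_of_nonneg_left hinvfac
          have h1 : (0 : ℝ) ≤ (L ^ γ) ^ k := by positivity
          have h2 : (0 : ℝ) ≤ (1.584 * ((j : ℝ) + 2) / M) ^ k := pow_nonneg hTnn k
          positivity
      _ = C * (k : ℝ) ^ 2 * ((1.584 * (L ^ γ) / M) ^ k *
            ((k : ℝ) ^ k / (Nat.factorial k : ℝ))) := by
          rw [key]; ring
      _ ≤ C * (k : ℝ) ^ 2 * ((1.584 * (L ^ γ) / M) ^ k * Real.exp 1 ^ k) := by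
          apply mul_le_mul_of_nonneg_left _ (by positivity)
          exact mul_le_mul_of_nonneg_left hpow_exp hA
      _ = C * (k : ℝ) ^ 2 * ((Real.exp 1 * 1.584 * (L ^ γ) / M) ^ k) := by
          rw [← mul_pow]; congr 2; ring
  -- geometric bound
  have hsnn : 0 ≤ Real.exp 1 * 1.584 * (L ^ γ) / M := by positivity
  have hgeom : (Real.exp 1 * 1.584 * (L ^ γ) / M) ^ k ≤ (1/2 : ℝ) ^ k :=
    pow_le_pow_left₀ hsnn hsmall k
  -- finish: C * k^2 * (1/2)^k ≤ C * (j^2 * (1/2)^j)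
  have hfin : C * (k : ℝ) ^ 2 * (1/2 : ℝ) ^ k ≤ C * ((j : ℝ) ^ 2 * (1/2 : ℝ) ^ j) := by
    have hjR : (2 : ℝ) ≤ (j : ℝ) := by exact_mod_cast hj2
    have h1 : ((k : ℝ)) ^ 2 ≤ 4 * (j : ℝ) ^ 2 := by rw [hkj]; nlinarith
    have h2 : (1/2 : ℝ) ^ k = (1/4) * (1/2 : ℝ) ^ j := by
      rw [hk, pow_add]; ring
    have hp : (0 : ℝ) ≤ (1/2 : ℝ) ^ j := by positivity
    have h3 : C * ((k : ℝ) ^ 2 * (1/2 : ℝ) ^ j) ≤ C * (4 * (j : ℝ) ^ 2 * (1/2 : ℝ) ^ j) := by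
      apply mul_le_mul_of_nonneg_left _ hC.le
      calc (k : ℝ) ^ 2 * (1/2 : ℝ) ^ j ≤ (4 * (j : ℝ) ^ 2) * (1/2 : ℝ) ^ j :=
        mul_le_mul_of_nonneg_right h1 hp
        _ = 4 * (j : ℝ) ^ 2 * (1/2 : ℝ) ^ j := by ring
    rw [h2]
    linarith [h3]
  -- assemble
  have hf_nonneg : 0 ≤ α k / (Nat.factorial j : ℝ) *
      (1.584 * ((j : ℝ) + 2) / M) ^ k :=
    mul_nonneg (div_nonneg (hα0 k) hfact_pos.le) (pow_nonneg hTnn k)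
  have hgnn : 0 ≤ (j : ℝ) ^ 2 * (1/2 : ℝ) ^ j := by positivity
  rw [Real.norm_eq_abs, Real.norm_eq_abs, abs_of_nonneg hf_nonneg, abs_of_nonneg hgnn]
  exact step1.trans (hcomb.trans
    (le_trans (mul_le_mul_of_nonneg_left hgeom (by positivity)) hfin))
end

section
/- Fix λ > 0 and α : ℕ → ℝ≥0 with ∑_{k≥2} α(k)/(k−2)! < ∞ and α(k) > 0 for some k ≥ 2. Define F₁(g) = λ(1 − g) + ∑_{k≥2} (α(k)/k!)·(1 − k)·g^k on [0,1]. Then F₁ is strictly decreasing on [0,1], F₁(0) = λ > 0, F₁(1) < 0, and hence F₁ has a unique zero in (0,1). -/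
/-!
The series part `∑ⱼ cⱼ gʲ⁺²` has nonpositive coefficients `cⱼ = -α(j+2)/((j+2)·j!)`, dominated
by the summable `α(j+2)/j!`, so it converges uniformly on `[0,1]` (Weierstrass M-test), is
continuous and antitone there; adding the strictly decreasing `λ(1 - g)` makes `F₁` strictly
decreasing. At `g = 1` only the series survives and it is negative because some coefficient is,
so the intermediate value theorem and strict monotonicity give exactly one zero.
-/

open Set Nat

theorem existsUnique_eq_of_strictAntiOn {α δ : Type*} [ConditionallyCompleteLinearOrder α]
    [TopologicalSpace α] [OrderTopology α] [DenselyOrdered α] [LinearOrder δ]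
    [TopologicalSpace δ] [OrderClosedTopology δ] {f : α → δ} {a b : α} {y : δ} (hab : a ≤ b)
    (hf : StrictAntiOn f (Icc a b)) (hcont : ContinuousOn f (Icc a b)) (hb : f b < y)
    (ha : y < f a) : ∃! x, x ∈ Ioo a b ∧ f x = y := by
  obtain ⟨x, hx, hfx⟩ := intermediate_value_Ioo' hab hcont ⟨hb, ha⟩
  exact ⟨x, ⟨hx, hfx⟩, fun x' ⟨hx', hfx'⟩ =>
    hf.injOn (Ioo_subset_Icc_self hx') (Ioo_subset_Icc_self hx) (hfx'.trans hfx.symm)⟩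

theorem tsum_neg_of_nonpos {ι : Type*} {c : ι → ℝ} (hc : Summable c) (hc0 : ∀ j, c j ≤ 0)
    {j₀ : ι} (hj₀ : c j₀ < 0) : ∑' j, c j < 0 := by
  simpa using hc.tsum_lt_tsum hc0 hj₀ summable_zero

section PowerSeries

variable {ι : Type*} {c : ι → ℝ} (e : ι → ℕ)

theorem norm_mul_pow_le_norm (a : ℝ) {x : ℝ} (hx : |x| ≤ 1) (n : ℕ) : ‖a * x ^ n‖ ≤ ‖a‖ := by
  rw [norm_mul, norm_pow, Real.norm_eq_abs x]
  exact mul_le_of_le_one_right (norm_nonneg a) (pow_le_one₀ (abs_nonneg x) hx)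

theorem summable_mul_pow_of_summable_norm (hc : Summable fun j => ‖c j‖) {x : ℝ}
    (hx : |x| ≤ 1) : Summable fun j => c j * x ^ e j :=
  .of_norm_bounded hc fun j => norm_mul_pow_le_norm (c j) hx (e j)

theorem continuousOn_tsum_mul_pow (hc : Summable fun j => ‖c j‖) :
    ContinuousOn (fun x : ℝ => ∑' j, c j * x ^ e j) (Icc (-1) 1) :=
  continuousOn_tsum (fun _ => by fun_prop) hc fun j _ hx =>
    norm_mul_pow_le_norm (c j) (abs_le.2 hx) (e j)

theorem antitoneOn_tsum_mul_pow_of_nonpos (hc : Summable fun j => ‖c j‖)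
    (hc0 : ∀ j, c j ≤ 0) : AntitoneOn (fun x : ℝ => ∑' j, c j * x ^ e j) (Icc 0 1) := by
  intro x hx y hy hxy
  have habs {z : ℝ} (hz : z ∈ Icc (0 : ℝ) 1) : |z| ≤ 1 := by rw [abs_of_nonneg hz.1]; exact hz.2
  exact Summable.tsum_le_tsum
    (fun j => mul_le_mul_of_nonpos_left (pow_le_pow_left₀ hx.1 hxy _) (hc0 j))
    (summable_mul_pow_of_summable_norm e hc (habs hy))
    (summable_mul_pow_of_summable_norm e hc (habs hx))

end PowerSeries

/-- The coefficient `α(k)/k! · (1 - k)` of `g ^ k` in `F₁`, indexed by `j = k - 2`. -/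
noncomputable def f₁Coeff (α : ℕ → ℝ) (j : ℕ) : ℝ :=
  α (j + 2) / ((j + 2)! : ℝ) * (1 - ((j : ℝ) + 2))

section F₁Coeff

variable {α : ℕ → ℝ}

theorem f₁Coeff_eq (α : ℕ → ℝ) (j : ℕ) : f₁Coeff α j = -(α (j + 2) / (j ! : ℝ) / (j + 2)) := by
  have hfact : ((j + 2)! : ℝ) = (j + 2) * (j + 1) * j ! := by
    push_cast [factorial_succ]
    ring
  have hj : (j : ℝ) + 1 ≠ 0 := by positivity
  rw [f₁Coeff, hfact]
  field_simp
  ring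

theorem f₁Coeff_nonpos (hα0 : ∀ k, 0 ≤ α k) (j : ℕ) : f₁Coeff α j ≤ 0 := by
  rw [f₁Coeff_eq, neg_nonpos]
  have := hα0 (j + 2)
  positivity

theorem f₁Coeff_neg {j : ℕ} (hj : 0 < α (j + 2)) : f₁Coeff α j < 0 := by
  rw [f₁Coeff_eq, neg_neg_iff_pos]
  positivity

theorem summable_norm_f₁Coeff (hα0 : ∀ k, 0 ≤ α k)
    (hsum : Summable fun j => α (j + 2) / (j ! : ℝ)) : Summable fun j => ‖f₁Coeff α j‖ := by
  refine .of_nonneg_of_le (fun _ => norm_nonneg _) (fun j => ?_) hsum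
  have hnonneg : 0 ≤ α (j + 2) / (j ! : ℝ) := by have := hα0 (j + 2); positivity
  rw [f₁Coeff_eq, norm_neg, Real.norm_of_nonneg (by positivity)]
  exact div_le_self hnonneg (by linarith [(j.cast_nonneg : (0 : ℝ) ≤ j)])

end F₁Coeff

/-- `F₁` is strictly decreasing on `[0,1]`, `F₁(0) = λ > 0`, `F₁(1) < 0`, hence
has a unique zero in `(0,1)` (index shifted: `k = j + 2`). -/
theorem F1_unique_zero (lam : ℝ) (hlam : 0 < lam)
    (α : ℕ → ℝ) (hα0 : ∀ k, 0 ≤ α k)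
    (hsum : Summable (fun j : ℕ => α (j + 2) / (Nat.factorial j : ℝ)))
    (hpos : ∃ j : ℕ, 0 < α (j + 2))
    (F₁ : ℝ → ℝ)
    (hF₁ : ∀ g : ℝ, F₁ g =
      lam * (1 - g) + ∑' j : ℕ,
        α (j + 2) / (Nat.factorial (j + 2) : ℝ) * (1 - ((j : ℝ) + 2)) * g ^ (j + 2)) :
    StrictAntiOn F₁ (Set.Icc (0 : ℝ) 1) ∧
    F₁ 0 = lam ∧ F₁ 1 < 0 ∧
    (∃! g : ℝ, g ∈ Set.Ioo (0 : ℝ) 1 ∧ F₁ g = 0) := by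
  have hF : F₁ = fun g => lam * (1 - g) + ∑' j, f₁Coeff α j * g ^ (j + 2) := funext hF₁
  have hc := summable_norm_f₁Coeff hα0 hsum
  have hanti : StrictAntiOn F₁ (Icc 0 1) := by
    rw [hF]
    exact StrictAntiOn.add_antitone (fun x _ y _ hxy => by nlinarith)
      (antitoneOn_tsum_mul_pow_of_nonpos _ hc (f₁Coeff_nonpos hα0))
  have hcont : ContinuousOn F₁ (Icc 0 1) := by
    rw [hF]
    exact (continuous_const.mul (continuous_const.sub continuous_id)).continuousOn.add
      ((continuousOn_tsum_mul_pow _ hc).mono (Icc_subset_Icc (by norm_num) le_rfl))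
  have hF0 : F₁ 0 = lam := by simp [hF]
  have hF1 : F₁ 1 < 0 := by
    obtain ⟨j, hj⟩ := hpos
    simpa [hF] using tsum_neg_of_nonpos hc.of_norm (f₁Coeff_nonpos hα0) (f₁Coeff_neg hj)
  exact ⟨hanti, hF0, hF1,
    existsUnique_eq_of_strictAntiOn zero_le_one hanti hcont hF1 (hF0 ▸ hlam)⟩
end

section
/- Let m ≥ 2 be an integer and let g : [0,1] → [0,1] satisfy m·g(x) − g(x)^m − x(m−1) = 0 for all x ∈ [0,1], with g(0) = 0. Then g is the pointwise limit, uniquely determined by this equation, and its power series coefficients p_k (i.e., g(x) = ∑_{k≥1} p_k x^k) are given by p_k = (1/k)·((m−1)/m)^k·(1/m)^{(k−1)/(m−1)}·C(m·(k−1)/(m−1), (k−1)/(m−1)) when (m−1) divides (k−1), and p_k = 0 otherwise. -/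
/-!
Substituting `y = (m - 1) x / m`, the claimed series is `y * B (y ^ (m - 1) / m)`, where
`B z = ∑ R(1, n) z ^ n` is the generating function of the Raney numbers
`R(a, n) = a / (a + n m) * C(a + n m, n)`. The Pascal-type recursion
`R(a + 1, n + 1) = R(a, n + 1) + R(a + m, n)` gives the convolution identity
`R(a, ·) * R(b, ·) = R(a + b, ·)`, hence `B ^ a = ∑ R(a, n) z ^ n` and `B = 1 + z B ^ m`;
the latter is exactly `m S - S ^ m = (m - 1) x` for `S = y B`. The same recursion bounds the
partial sums of `∑ R(a, n) z ^ n` by `(m / (m - 1)) ^ a`, which gives convergence up to the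
boundary point `x = 1`.
Uniqueness holds because `y ↦ m y - y ^ m` is strictly increasing on `[0, 1]`.
-/

/-- The coefficients of the limiting stationary cluster size distribution:
`p_k = (1/k)((m−1)/m)^k (1/m)^{(k−1)/(m−1)} C(m(k−1)/(m−1), (k−1)/(m−1))` when
`(m−1) ∣ (k−1)`, and `0` otherwise. -/
noncomputable def pcoef (m k : ℕ) : ℝ :=
  if (m - 1) ∣ (k - 1) then
    (1 / (k : ℝ)) * (((m : ℝ) - 1) / m) ^ k * ((1 : ℝ) / m) ^ ((k - 1) / (m - 1)) *
      (Nat.choose (m * ((k - 1) / (m - 1))) ((k - 1) / (m - 1)) : ℝ)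
  else 0

open Finset

-- The `if` makes `raney m 0 0 = 1`; the closed formula would give `0 / 0 = 0` there.
noncomputable def raney (m a n : ℕ) : ℝ :=
  if n = 0 then 1 else a / (a + n * m) * ((a + n * m).choose n : ℝ)

section Raney

variable {m a n : ℕ}

@[simp]
lemma raney_zero_right (m a : ℕ) : raney m a 0 = 1 := if_pos rfl

lemma raney_of_ne_zero_right (hn : n ≠ 0) :
    raney m a n = a / (a + n * m) * ((a + n * m).choose n : ℝ) := if_neg hn

lemma raney_of_ne_zero_left (ha : a ≠ 0) :
    raney m a n = a / (a + n * m) * ((a + n * m).choose n : ℝ) := by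
  rcases eq_or_ne n 0 with rfl | hn
  · simp [ha]
  · exact raney_of_ne_zero_right hn

lemma raney_zero_left (hn : n ≠ 0) : raney m 0 n = 0 := by
  simp [raney_of_ne_zero_right hn]

lemma raney_nonneg (m a n : ℕ) : 0 ≤ raney m a n := by
  unfold raney
  split_ifs <;> positivity

lemma raney_succ_succ (hm : 0 < m) (a n : ℕ) :
    raney m (a + 1) (n + 1) = raney m a (n + 1) + raney m (a + m) n := by
  set N := a + (n + 1) * m with hN
  have hnN : n < N := by nlinarith
  rw [raney_of_ne_zero_right n.succ_ne_zero, raney_of_ne_zero_right n.succ_ne_zero,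
    raney_of_ne_zero_left (by omega : a + m ≠ 0),
    show a + 1 + (n + 1) * m = N + 1 by omega, show a + m + n * m = N by rw [hN]; ring]
  have hsucc : ((N + 1).choose (n + 1) : ℝ) = N.choose n * (N + 1) / (n + 1) := by
    rw [eq_div_iff (by positivity)]
    exact_mod_cast (Nat.add_one_mul_choose_eq N n).symm.trans (mul_comm _ _)
  have hright : (N.choose (n + 1) : ℝ) = N.choose n * (N - n) / (n + 1) := by
    rw [eq_div_iff (by positivity), ← Nat.cast_sub hnN.le]
    exact_mod_cast Nat.choose_succ_right_eq N n
  have hNR : (N : ℝ) = a + (n + 1) * m := by rw [hN]; push_cast; ring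
  have hN0 : (N : ℝ) ≠ 0 := by positivity
  push_cast
  rw [hsucc, hright, show (a : ℝ) + 1 + (n + 1) * m = N + 1 by rw [hNR]; ring,
    show (a : ℝ) + m + n * m = N by rw [hNR]; ring, ← hNR]
  field_simp
  rw [hNR]
  ring

lemma raney_one_succ (hm : 0 < m) (n : ℕ) : raney m 1 (n + 1) = raney m m n := by
  simpa [raney_zero_left n.succ_ne_zero] using raney_succ_succ hm 0 n

lemma sum_antidiagonal_raney (hm : 0 < m) (n a b : ℕ) :
    ∑ p ∈ antidiagonal n, raney m a p.1 * raney m b p.2 = raney m (a + b) n := by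
  induction n generalizing a b with
  | zero => simp
  | succ n ihn =>
    induction a with
    | zero => simp [Nat.sum_antidiagonal_succ, raney_zero_left]
    | succ a iha =>
      have hsplit :=
        Nat.sum_antidiagonal_succ (n := n) (f := fun p ↦ raney m a p.1 * raney m b p.2)
      simp only [raney_zero_right, one_mul, iha] at hsplit
      rw [Nat.sum_antidiagonal_succ]
      simp only [raney_zero_right, one_mul, raney_succ_succ hm, add_mul, sum_add_distrib,
        ihn (a + m) b]
      rw [← add_assoc, ← hsplit, Nat.add_right_comm a m b, Nat.add_right_comm a 1 b,
        raney_succ_succ hm]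

lemma raney_one_eq (hm : 0 < m) (n : ℕ) :
    raney m 1 n = ((m * n).choose n : ℝ) / ((m - 1) * n + 1 : ℕ) := by
  obtain ⟨k, rfl⟩ : ∃ k, m = k + 1 := ⟨m - 1, by omega⟩
  rw [raney_of_ne_zero_left one_ne_zero, Nat.add_sub_cancel,
    show 1 + n * (k + 1) = (k + 1) * n + 1 by ring]
  have h := Nat.choose_mul_succ_eq ((k + 1) * n) n
  rw [show (k + 1) * n + 1 - n = k * n + 1 by rw [add_mul, one_mul]; omega] at h
  rw [div_mul_eq_mul_div, div_eq_div_iff (by positivity) (by positivity)]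
  have hR := congrArg (Nat.cast (R := ℝ)) h
  push_cast at hR ⊢
  linear_combination -hR

end Raney

section RaneySeries

variable {m : ℕ} {z : ℝ}

lemma sum_range_raney_succ (hm : 0 < m) (z : ℝ) (a N : ℕ) :
    ∑ n ∈ range (N + 1), raney m (a + 1) n * z ^ n =
      ∑ n ∈ range (N + 1), raney m a n * z ^ n +
        z * ∑ n ∈ range N, raney m (a + m) n * z ^ n := by
  simp only [sum_range_succ' _ N, raney_succ_succ hm, add_mul, sum_add_distrib, mul_sum,
    raney_zero_right]
  rw [add_right_comm]
  congr 1
  exact sum_congr rfl fun n _ ↦ by ring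

lemma sum_range_raney_le_pow (hm : 0 < m) (hz : 0 ≤ z) {L : ℝ} (hL : 0 ≤ L)
    (hzL : 1 + z * L ^ m ≤ L) (N a : ℕ) : ∑ n ∈ range N, raney m a n * z ^ n ≤ L ^ a := by
  induction N generalizing a with
  | zero => simpa using pow_nonneg hL a
  | succ N ihN =>
    induction a with
    | zero => simp [sum_range_succ', raney_zero_left]
    | succ a iha =>
      calc ∑ n ∈ range (N + 1), raney m (a + 1) n * z ^ n
          ≤ L ^ a + z * L ^ (a + m) := by
            rw [sum_range_raney_succ hm]
            gcongr
            exact ihN (a + m)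
        _ = L ^ a * (1 + z * L ^ m) := by ring
        _ ≤ L ^ (a + 1) := by rw [pow_succ]; gcongr

lemma summable_raney (hm : 0 < m) (hz : 0 ≤ z) {L : ℝ} (hL : 0 ≤ L)
    (hzL : 1 + z * L ^ m ≤ L) (a : ℕ) : Summable fun n ↦ raney m a n * z ^ n :=
  summable_of_sum_range_le (fun n ↦ by have := raney_nonneg m a n; positivity)
    (sum_range_raney_le_pow hm hz hL hzL · a)

lemma tsum_raney_mul_tsum_raney (hm : 0 < m) (hz : 0 ≤ z)
    (hsum : ∀ a, Summable fun n ↦ raney m a n * z ^ n) (a b : ℕ) :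
    (∑' n, raney m a n * z ^ n) * (∑' n, raney m b n * z ^ n) =
      ∑' n, raney m (a + b) n * z ^ n := by
  have hnonneg : ∀ a, 0 ≤ fun n ↦ raney m a n * z ^ n := fun a n ↦ by
    have := raney_nonneg m a n; positivity
  rw [(hsum a).tsum_mul_tsum_eq_tsum_sum_antidiagonal (hsum b)
    ((hsum a).mul_of_nonneg (hsum b) (hnonneg a) (hnonneg b))]
  refine tsum_congr fun n ↦ ?_
  rw [← sum_antidiagonal_raney hm n a b, sum_mul]
  refine sum_congr rfl fun p hp ↦ ?_
  rw [← mem_antidiagonal.mp hp, pow_add]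
  ring

lemma tsum_raney_zero : ∑' n, raney m 0 n * z ^ n = 1 := by
  rw [tsum_eq_single 0 fun n hn ↦ by rw [raney_zero_left hn, zero_mul]]
  simp

lemma tsum_raney_one_pow (hm : 0 < m) (hz : 0 ≤ z)
    (hsum : ∀ a, Summable fun n ↦ raney m a n * z ^ n) (a : ℕ) :
    (∑' n, raney m 1 n * z ^ n) ^ a = ∑' n, raney m a n * z ^ n := by
  induction a with
  | zero => rw [pow_zero, tsum_raney_zero]
  | succ a ih => rw [pow_succ, ih, tsum_raney_mul_tsum_raney hm hz hsum]

lemma tsum_raney_one_eq (hm : 0 < m) (hz : 0 ≤ z)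
    (hsum : ∀ a, Summable fun n ↦ raney m a n * z ^ n) :
    ∑' n, raney m 1 n * z ^ n = 1 + z * (∑' n, raney m 1 n * z ^ n) ^ m := by
  rw [tsum_raney_one_pow hm hz hsum, (hsum 1).tsum_eq_zero_add, ← tsum_mul_left]
  simp only [raney_zero_right, raney_one_succ hm, pow_zero, pow_succ, mul_one]
  congr 1
  exact tsum_congr fun n ↦ by ring

end RaneySeries

lemma mul_sub_pow_eq_of_eq_one_add {m : ℕ} (hm : m ≠ 0) {y B : ℝ}
    (hB : B = 1 + y ^ (m - 1) / m * B ^ m) : m * (y * B) - (y * B) ^ m = m * y := by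
  have hm0 : (m : ℝ) ≠ 0 := by exact_mod_cast hm
  rw [mul_pow, ← mul_pow_sub_one hm y]
  field_simp at hB
  linear_combination y * hB

lemma pcoef_mul_pow {m : ℕ} (hm : 2 ≤ m) (x : ℝ) (j : ℕ) :
    pcoef m ((m - 1) * j + 1) * x ^ ((m - 1) * j + 1) =
      ((m - 1) / m * x) * (raney m 1 j * (((m - 1) / m * x) ^ (m - 1) / m) ^ j) := by
  have hdiv : (m - 1) * j / (m - 1) = j := Nat.mul_div_cancel_left j (by omega)
  rw [pcoef, Nat.add_sub_cancel, if_pos (dvd_mul_right _ _), hdiv, raney_one_eq (by omega)]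
  have hm1 : ((m - 1 : ℕ) : ℝ) = m - 1 := by rw [Nat.cast_sub (by omega)]; simp
  push_cast
  rw [hm1]
  set c : ℝ := (m - 1) / m
  rw [mul_pow c x, pow_succ c, pow_succ x, pow_mul c, pow_mul x]
  ring

lemma tsum_pcoef_mul_pow {m : ℕ} (hm : 2 ≤ m) (x : ℝ) :
    ∑' k, pcoef m (k + 1) * x ^ (k + 1) =
      ((m - 1) / m * x) * ∑' j, raney m 1 j * (((m - 1) / m * x) ^ (m - 1) / m) ^ j := by
  have hsupp : (Function.support fun k ↦ pcoef m (k + 1) * x ^ (k + 1)) ⊆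
      Set.range fun j ↦ (m - 1) * j := by
    intro k hk
    by_contra hndvd
    refine hk ?_
    simp only [pcoef, Nat.add_sub_cancel]
    rw [if_neg fun ⟨j, hj⟩ ↦ hndvd ⟨j, hj.symm⟩, zero_mul]
  rw [← tsum_mul_left, ← (mul_right_injective₀ (by omega : m - 1 ≠ 0)).tsum_eq hsupp]
  exact tsum_congr (pcoef_mul_pow hm x)

lemma tsum_pcoef_mul_pow_mem_Icc_and_eq {m : ℕ} (hm : 2 ≤ m) {x : ℝ}
    (hx : x ∈ Set.Icc (0 : ℝ) 1) :
    ∑' k, pcoef m (k + 1) * x ^ (k + 1) ∈ Set.Icc (0 : ℝ) 1 ∧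
      (m : ℝ) * (∑' k, pcoef m (k + 1) * x ^ (k + 1)) -
        (∑' k, pcoef m (k + 1) * x ^ (k + 1)) ^ m - x * ((m : ℝ) - 1) = 0 := by
  have hm1 : (1 : ℝ) < m := by exact_mod_cast hm
  set y : ℝ := (m - 1) / m * x with hy
  set z : ℝ := y ^ (m - 1) / m
  -- `L` is the value of the Raney series at the boundary point `x = 1`.
  set L : ℝ := m / (m - 1) with hL_def
  have hm_sub : (m : ℝ) - 1 ≠ 0 := by linarith
  have hy0 : 0 ≤ y := by have := hx.1; positivity
  have hz : 0 ≤ z := by positivity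
  have hL : 0 ≤ L := by positivity
  have hyL : y * L = x := by rw [hy, hL_def]; field_simp
  have hzL : 1 + z * L ^ m ≤ L := by
    have hpow : z * L ^ m = x ^ (m - 1) * (L / m) := by
      rw [← mul_pow_sub_one (by omega : m ≠ 0) L, ← hyL, mul_pow]
      ring
    have hxpow : x ^ (m - 1) ≤ 1 := pow_le_one₀ hx.1 hx.2
    have hLm : 1 + L / m = L := by rw [hL_def]; field_simp; ring
    calc 1 + z * L ^ m ≤ 1 + L / m := by
          rw [hpow]; gcongr; exact mul_le_of_le_one_left (by positivity) hxpow
      _ = L := hLm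
  have hsum := summable_raney (by omega) hz hL hzL
  set B := ∑' n, raney m 1 n * z ^ n
  have hB0 : 0 ≤ B := tsum_nonneg fun n ↦ by have := raney_nonneg m 1 n; positivity
  have hBL : B ≤ L := (hsum 1).tsum_le_of_sum_range_le
    fun N ↦ (sum_range_raney_le_pow (by omega) hz hL hzL N 1).trans_eq (pow_one L)
  have hB := tsum_raney_one_eq (by omega) hz hsum
  rw [tsum_pcoef_mul_pow hm x]
  refine ⟨⟨mul_nonneg hy0 hB0, ?_⟩, ?_⟩
  · calc y * B ≤ y * L := by gcongr
      _ ≤ 1 := hyL ▸ hx.2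
  · have hmy : (m : ℝ) * y = x * (m - 1) := by rw [hy]; field_simp
    linear_combination mul_sub_pow_eq_of_eq_one_add (by omega) hB + hmy

lemma strictMonoOn_mul_sub_pow {m : ℕ} (hm : 2 ≤ m) :
    StrictMonoOn (fun y : ℝ ↦ m * y - y ^ m) (Set.Icc 0 1) := by
  refine strictMonoOn_of_deriv_pos (convex_Icc 0 1) (by fun_prop) fun y hy ↦ ?_
  rw [interior_Icc] at hy
  have hderiv : HasDerivAt (fun y : ℝ ↦ m * y - y ^ m) (m * 1 - m * y ^ (m - 1)) y :=
    ((hasDerivAt_id y).const_mul (m : ℝ)).sub (hasDerivAt_pow m y)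
  have hpow : y ^ (m - 1) < 1 := pow_lt_one₀ hy.1.le hy.2 (by omega)
  rw [hderiv.deriv]
  linarith [mul_lt_mul_of_pos_left hpow (by positivity : (0 : ℝ) < m)]

theorem stationary_generating_function_general (m : ℕ) (hm : 2 ≤ m) (g : ℝ → ℝ)
    (hmap : ∀ x ∈ Set.Icc (0 : ℝ) 1, g x ∈ Set.Icc (0 : ℝ) 1)
    (heq : ∀ x ∈ Set.Icc (0 : ℝ) 1, (m : ℝ) * g x - g x ^ m - x * ((m : ℝ) - 1) = 0) :
    (∀ g₂ : ℝ → ℝ, (∀ x ∈ Set.Icc (0 : ℝ) 1, g₂ x ∈ Set.Icc (0 : ℝ) 1) →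
      (∀ x ∈ Set.Icc (0 : ℝ) 1, (m : ℝ) * g₂ x - g₂ x ^ m - x * ((m : ℝ) - 1) = 0) →
      g₂ 0 = 0 → ∀ x ∈ Set.Icc (0 : ℝ) 1, g₂ x = g x) ∧
    (∀ x ∈ Set.Icc (0 : ℝ) 1, g x = ∑' k : ℕ, pcoef m (k + 1) * x ^ (k + 1)) := by
  have hinj := (strictMonoOn_mul_sub_pow hm).injOn
  refine ⟨fun g₂ hmap₂ heq₂ _ x hx ↦ ?_, fun x hx ↦ ?_⟩
  · exact hinj (hmap₂ x hx) (hmap x hx) (by linarith [heq₂ x hx, heq x hx])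
  · obtain ⟨hmem, hsol⟩ := tsum_pcoef_mul_pow_mem_Icc_and_eq hm hx
    exact hinj (hmap x hx) hmem (by linarith [heq x hx])

/-- If `g : [0,1] → [0,1]` satisfies `m·g(x) − g(x)^m − x(m−1) = 0` with `g(0) = 0`,
then `g` is uniquely determined by this equation and its power series coefficients
are the `pcoef m k`. -/
theorem stationary_generating_function (m : ℕ) (hm : 2 ≤ m) (g : ℝ → ℝ)
    (hmap : ∀ x ∈ Set.Icc (0 : ℝ) 1, g x ∈ Set.Icc (0 : ℝ) 1)
    (heq : ∀ x ∈ Set.Icc (0 : ℝ) 1, (m : ℝ) * g x - g x ^ m - x * ((m : ℝ) - 1) = 0)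
    (h0 : g 0 = 0) :
    (∀ g₂ : ℝ → ℝ, (∀ x ∈ Set.Icc (0 : ℝ) 1, g₂ x ∈ Set.Icc (0 : ℝ) 1) →
      (∀ x ∈ Set.Icc (0 : ℝ) 1, (m : ℝ) * g₂ x - g₂ x ^ m - x * ((m : ℝ) - 1) = 0) →
      g₂ 0 = 0 → ∀ x ∈ Set.Icc (0 : ℝ) 1, g₂ x = g x) ∧
    (∀ x ∈ Set.Icc (0 : ℝ) 1, g x = ∑' k : ℕ, pcoef m (k + 1) * x ^ (k + 1)) :=
  stationary_generating_function_general m hm g hmap heq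
end

section
/- Let m ≥ 2 and define for k with (m−1) | (k−1) the quantity p_k = (1/k)·((m−1)/m)^k·(1/m)^{(k−1)/(m−1)}·C(m·(k−1)/(m−1), (k−1)/(m−1)), where C denotes the binomial coefficient. Then there exists a constant c > 0 such that p_k / k^{−3/2} → c as k → ∞ along the arithmetic progression k ≡ 1 (mod m−1). -/
open Filter

open Stirling Nat

/-- Express the factorial via the Stirling sequence. -/
lemma fact_eq_stirling (j : ℕ) (hj : 1 ≤ j) :
    (j ! : ℝ) = stirlingSeq j * (Real.sqrt (2 * j) * ((j : ℝ) / Real.exp 1) ^ j) := by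
  have hj' : (0:ℝ) < j := by exact_mod_cast hj
  have h : Real.sqrt (2 * j) * ((j : ℝ) / Real.exp 1) ^ j ≠ 0 := by positivity
  rw [stirlingSeq]
  field_simp

lemma stirlingSeq_pos (j : ℕ) (hj : 1 ≤ j) : 0 < stirlingSeq j := by
  obtain ⟨i, rfl⟩ : ∃ i, j = i + 1 := ⟨j - 1, by omega⟩
  exact stirlingSeq'_pos i

/-- Exact expression of the normalized coefficient in terms of Stirling sequences. -/
lemma pcoef_eq (m : ℕ) (hm : 2 ≤ m) (n : ℕ) (hn : 1 ≤ n) :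
    pcoef m (n * (m - 1) + 1) / ((n * (m - 1) + 1 : ℕ) : ℝ) ^ (-(3 : ℝ) / 2)
      = stirlingSeq (m * n) / (stirlingSeq n * stirlingSeq ((m - 1) * n)) *
          (((m : ℝ) - 1) / m *
            Real.sqrt ((m : ℝ) * ((n * (m - 1) + 1 : ℕ) : ℝ) / (2 * ((m : ℝ) - 1) * n))) := by
  have h1m : 1 ≤ m := by omega
  have hk1 : n * (m - 1) + 1 - 1 = n * (m - 1) := rfl
  have hdvd : (m - 1) ∣ (n * (m - 1) + 1 - 1) := by rw [hk1]; exact dvd_mul_left _ _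
  have hq : (n * (m - 1) + 1 - 1) / (m - 1) = n := by
    rw [hk1]; exact Nat.mul_div_cancel n (by omega)
  rw [pcoef, if_pos hdvd, hq]
  set M : ℝ := (m : ℝ) with hMdef
  set N : ℝ := (n : ℝ) with hNdef
  set K : ℝ := ((n * (m - 1) + 1 : ℕ) : ℝ) with hKdef
  have hM2 : (2:ℝ) ≤ M := by rw [hMdef]; exact_mod_cast hm
  have hM0 : (0:ℝ) < M := by linarith
  have hM1 : (0:ℝ) < M - 1 := by linarith
  have hN0 : (0:ℝ) < N := by rw [hNdef]; exact_mod_cast hn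
  have hK0 : (0:ℝ) < K := by rw [hKdef]; exact_mod_cast Nat.succ_pos _
  have hrpow : K ^ (-(3:ℝ)/2) = (K * Real.sqrt K)⁻¹ := by
    rw [neg_div, Real.rpow_neg hK0.le]
    congr 1
    rw [show (3:ℝ)/2 = 1 + 1/2 by norm_num, Real.rpow_add hK0, Real.rpow_one,
      ← Real.sqrt_eq_rpow]
  have hsub : m * n - n = (m - 1) * n := by
    obtain ⟨m', rfl⟩ : ∃ m', m = m' + 1 := ⟨m - 1, by omega⟩
    simp [Nat.succ_mul]
  have hc : (((m * n).choose n : ℕ) : ℝ) = ((m*n)! : ℝ) / ((n ! : ℝ) * (((m-1)*n)! : ℝ)) := by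
    rw [Nat.cast_choose ℝ (Nat.le_mul_of_pos_left n (by omega)), hsub]
  have hmn1 : 1 ≤ m * n := Nat.one_le_iff_ne_zero.mpr (Nat.mul_ne_zero (by omega) (by omega))
  have hm1n1 : 1 ≤ (m - 1) * n := Nat.one_le_iff_ne_zero.mpr (Nat.mul_ne_zero (by omega) (by omega))
  have e2 : (((m - 1) * n : ℕ) : ℝ) = (M - 1) * N := by
    rw [Nat.cast_mul, Nat.cast_sub h1m, Nat.cast_one]
  have e3 : ((m * n : ℕ) : ℝ) = M * N := by push_cast; ring
  have hs1 : 0 < stirlingSeq n := stirlingSeq_pos n hn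
  have hs2 : 0 < stirlingSeq ((m - 1) * n) := stirlingSeq_pos _ hm1n1
  have hf1 : (n ! : ℝ) = stirlingSeq n * (Real.sqrt 2 * Real.sqrt N * (N / Real.exp 1) ^ n) := by
    rw [fact_eq_stirling n hn, ← Real.sqrt_mul (by norm_num : (0:ℝ) ≤ 2) N]
  have hexp1 : m * n = n + (m - 1) * n := by
    obtain ⟨m', rfl⟩ : ∃ m', m = m' + 1 := ⟨m - 1, by omega⟩
    simp [Nat.succ_mul]; ring
  have hf2 : ((((m-1)*n) !) : ℝ)
      = stirlingSeq ((m-1)*n) * (Real.sqrt 2 * (Real.sqrt (M-1) * Real.sqrt N) *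
          ((M-1) ^ ((m-1)*n) * (N / Real.exp 1) ^ ((m-1)*n))) := by
    rw [fact_eq_stirling _ hm1n1, e2, Real.sqrt_mul (by norm_num : (0:ℝ) ≤ 2),
      Real.sqrt_mul hM1.le N, mul_div_assoc, mul_pow]
  have hf3 : (((m*n) !) : ℝ)
      = stirlingSeq (m*n) * (Real.sqrt 2 * (Real.sqrt M * Real.sqrt N) *
          (M ^ (m*n) * ((N / Real.exp 1) ^ n * (N / Real.exp 1) ^ ((m-1)*n)))) := by
    rw [fact_eq_stirling _ hmn1, e3, Real.sqrt_mul (by norm_num : (0:ℝ) ≤ 2),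
      Real.sqrt_mul hM0.le N, mul_div_assoc, mul_pow,
      show ((N:ℝ)/Real.exp 1) ^ (m*n) = (N/Real.exp 1) ^ n * (N/Real.exp 1) ^ ((m-1)*n) by
        rw [← pow_add, ← hexp1]]
  have h4 : (M - 1) ^ (n * (m-1) + 1) = (M - 1) ^ ((m-1)*n) * (M - 1) := by
    rw [pow_succ, Nat.mul_comm n (m-1)]
  have hexp2 : n * (m - 1) + 1 + n = m * n + 1 := by
    obtain ⟨m', rfl⟩ : ∃ m', m = m' + 1 := ⟨m - 1, by omega⟩
    simp [Nat.succ_mul]; ring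
  have h5 : M ^ (n * (m-1) + 1) = M ^ (m*n) * M / M ^ n := by
    rw [eq_div_iff (pow_ne_zero _ hM0.ne'), ← pow_add, hexp2, pow_succ]
  have hs4 : Real.sqrt (M * K / (2 * (M - 1) * N))
      = Real.sqrt M * Real.sqrt K / (Real.sqrt 2 * (Real.sqrt (M-1) * Real.sqrt N)) := by
    rw [Real.sqrt_div (by positivity), Real.sqrt_mul hM0.le,
      show (2 * (M-1) * N) = 2 * ((M-1) * N) by ring,
      Real.sqrt_mul (by norm_num : (0:ℝ) ≤ 2), Real.sqrt_mul hM1.le N]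
  have hP1 : ((N / Real.exp 1) ^ n) ≠ 0 := by positivity
  have hP2 : ((N / Real.exp 1) ^ ((m-1)*n)) ≠ 0 := by positivity
  have hsqK : 0 < Real.sqrt K := Real.sqrt_pos.mpr hK0
  have hsqN : 0 < Real.sqrt N := Real.sqrt_pos.mpr hN0
  have hsqM : 0 < Real.sqrt M := Real.sqrt_pos.mpr hM0
  have hsqM1 : 0 < Real.sqrt (M-1) := Real.sqrt_pos.mpr hM1
  have hsq2 : 0 < Real.sqrt 2 := by positivity
  rw [hrpow, hc, hf1, hf2, hf3, div_pow, h4, h5, hs4, one_div M, inv_pow]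
  field_simp

/-- Universal `k^{−3/2}` power-law tail: `p_k / k^{−3/2} → c > 0` as `k → ∞` along the
arithmetic progression `k = n(m−1) + 1`. -/
theorem pcoef_power_law_tail (m : ℕ) (hm : 2 ≤ m) :
    ∃ c : ℝ, 0 < c ∧
      Tendsto (fun n : ℕ =>
          pcoef m (n * (m - 1) + 1) / ((n * (m - 1) + 1 : ℕ) : ℝ) ^ (-(3 : ℝ) / 2))
        atTop (nhds c) := by
  have hM2 : (2:ℝ) ≤ (m:ℝ) := by exact_mod_cast hm
  have hM1 : (0:ℝ) < (m:ℝ) - 1 := by linarith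
  have hpi : (0:ℝ) < Real.sqrt Real.pi := Real.sqrt_pos.mpr Real.pi_pos
  have hc1 : Tendsto (fun n : ℕ => m * n) atTop atTop :=
    tendsto_atTop_mono (fun n => Nat.le_mul_of_pos_left n (by omega)) tendsto_id
  have hc2 : Tendsto (fun n : ℕ => (m - 1) * n) atTop atTop :=
    tendsto_atTop_mono (fun n => Nat.le_mul_of_pos_left n (by omega)) tendsto_id
  have T3 : Tendsto (fun n : ℕ => stirlingSeq (m * n)) atTop (nhds (Real.sqrt Real.pi)) :=
    tendsto_stirlingSeq_sqrt_pi.comp hc1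
  have T2 : Tendsto (fun n : ℕ => stirlingSeq ((m - 1) * n)) atTop (nhds (Real.sqrt Real.pi)) :=
    tendsto_stirlingSeq_sqrt_pi.comp hc2
  have Tdiv : Tendsto
      (fun n : ℕ => stirlingSeq (m * n) / (stirlingSeq n * stirlingSeq ((m - 1) * n)))
      atTop (nhds (Real.sqrt Real.pi / (Real.sqrt Real.pi * Real.sqrt Real.pi))) :=
    T3.div (tendsto_stirlingSeq_sqrt_pi.mul T2) (by positivity)
  have hin : Tendsto (fun n : ℕ => (m:ℝ) * ((n * (m - 1) + 1 : ℕ) : ℝ) / (2 * ((m:ℝ) - 1) * n))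
      atTop (nhds ((m:ℝ)/2)) := by
    have h0 : Tendsto (fun n : ℕ => (m:ℝ)/2 + ((m:ℝ)/(2*((m:ℝ)-1))) * (1/(n:ℝ)))
        atTop (nhds ((m:ℝ)/2 + ((m:ℝ)/(2*((m:ℝ)-1))) * 0)) :=
      tendsto_const_nhds.add (tendsto_const_nhds.mul tendsto_one_div_atTop_nhds_zero_nat)
    rw [mul_zero, add_zero] at h0
    refine h0.congr' ?_
    filter_upwards [eventually_ge_atTop 1] with n hn
    have hN0 : (0:ℝ) < (n:ℝ) := by exact_mod_cast hn
    push_cast [Nat.cast_sub (show 1 ≤ m by omega)]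
    field_simp
  have Tsq : Tendsto (fun n : ℕ =>
      (((m : ℝ) - 1) / m *
        Real.sqrt ((m : ℝ) * ((n * (m - 1) + 1 : ℕ) : ℝ) / (2 * ((m : ℝ) - 1) * n))))
      atTop (nhds ((((m:ℝ)-1)/m) * Real.sqrt ((m:ℝ)/2))) :=
    tendsto_const_nhds.mul hin.sqrt
  refine ⟨_, ?_, (Tdiv.mul Tsq).congr' ?_⟩
  · have : (0:ℝ) < Real.sqrt ((m:ℝ)/2) := Real.sqrt_pos.mpr (by linarith)
    positivity
  · filter_upwards [eventually_ge_atTop 1] with n hn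
    exact (pcoef_eq m hm n hn).symm
end

section
/- Let m ≥ 2 and define p_k for k ≥ 1 by p_k = (1/k)·((m−1)/m)^k·(1/m)^{(k−1)/(m−1)}·C(m(k−1)/(m−1), (k−1)/(m−1)) if (m−1) divides (k−1), and p_k = 0 otherwise. Then ∑_{k≥1} p_k = 1. -/
open Finset

theorem sum_range_sum_antidiagonal_le_mul {a b : ℕ → ℝ} (ha : 0 ≤ a) (hb : 0 ≤ b) (N : ℕ) :
    ∑ n ∈ range N, ∑ p ∈ antidiagonal n, a p.1 * b p.2 ≤
      (∑ n ∈ range N, a n) * ∑ n ∈ range N, b n := by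
  have hdisj : (range N : Set ℕ).PairwiseDisjoint antidiagonal := fun i _ j _ hij =>
    disjoint_left.2 fun p hi hj =>
      hij ((HasAntidiagonal.mem_antidiagonal.1 hi).symm.trans
        (HasAntidiagonal.mem_antidiagonal.1 hj))
  rw [sum_mul_sum, ← sum_product', ← sum_biUnion hdisj]
  refine sum_le_sum_of_subset_of_nonneg (fun p hp => ?_) fun p _ _ => mul_nonneg (ha _) (hb _)
  simp only [mem_biUnion, mem_range, HasAntidiagonal.mem_antidiagonal, mem_product] at hp ⊢
  obtain ⟨n, hn, rfl⟩ := hp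
  omega

-- The coefficient of `x ^ n` in `B ^ r`, where `B = 1 + x B ^ m`; the `if` avoids the junk value
-- `0 / 0` at `r = n = 0`.
noncomputable def fussCatalan (m r n : ℕ) : ℝ :=
  if n = 0 then 1 else r / (m * n + r : ℕ) * (m * n + r).choose n

@[simp]
lemma fussCatalan_zero (m r : ℕ) : fussCatalan m r 0 = 1 := if_pos rfl

@[simp]
lemma fussCatalan_zero_succ (m n : ℕ) : fussCatalan m 0 (n + 1) = 0 := by
  simp [fussCatalan]

lemma fussCatalan_nonneg (m r n : ℕ) : 0 ≤ fussCatalan m r n := by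
  unfold fussCatalan; split_ifs <;> positivity

lemma fussCatalan_of_pos {r : ℕ} (hr : 0 < r) (m n : ℕ) :
    fussCatalan m r n = r / (m * n + r : ℕ) * (m * n + r).choose n := by
  unfold fussCatalan
  split_ifs with hn
  · subst hn; simp [hr.ne']
  · rfl

lemma fussCatalan_succ_succ {m : ℕ} (hm : 0 < m) (r n : ℕ) :
    fussCatalan m (r + 1) (n + 1) = fussCatalan m r (n + 1) + fussCatalan m (r + m) n := by
  set N := m * (n + 1) + r with hN
  have hnN : n ≤ N := by nlinarith
  rw [fussCatalan_of_pos r.succ_pos, fussCatalan_of_pos (by omega : 0 < r + m), fussCatalan,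
    if_neg n.succ_ne_zero, show m * (n + 1) + (r + 1) = N + 1 by omega,
    show m * n + (r + m) = N by rw [hN]; ring, ← hN]
  have hP : ((N + 1).choose (n + 1) : ℝ) = (N + 1) * N.choose n / (n + 1) := by
    rw [eq_div_iff (by positivity)]; exact_mod_cast (Nat.add_one_mul_choose_eq N n).symm
  have hb : (N.choose (n + 1) : ℝ) = N.choose n * (N - n) / (n + 1) := by
    rw [eq_div_iff (by positivity)]
    have h := congrArg (Nat.cast (R := ℝ)) (Nat.choose_succ_right_eq N n)
    push_cast [Nat.cast_sub hnN] at h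
    exact h
  have hNr : (N : ℝ) = m * (n + 1) + r := by rw [hN]; push_cast; ring
  have hN0 : (N : ℝ) ≠ 0 := by rw [hNr]; positivity
  push_cast
  rw [hP, hb]
  field_simp
  rw [hNr]
  ring

lemma fussCatalan_one_succ {m : ℕ} (hm : 0 < m) (n : ℕ) :
    fussCatalan m 1 (n + 1) = fussCatalan m m n := by
  simpa using fussCatalan_succ_succ hm 0 n

theorem sum_antidiagonal_fussCatalan {m : ℕ} (hm : 0 < m) (r s n : ℕ) :
    ∑ p ∈ antidiagonal n, fussCatalan m r p.1 * fussCatalan m s p.2 = fussCatalan m (r + s) n := by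
  induction n using Nat.strong_induction_on generalizing r with
  | _ n ihn =>
    induction r with
    | zero =>
      cases n with
      | zero => simp
      | succ n => simp [Nat.sum_antidiagonal_succ]
    | succ r ihr =>
      cases n with
      | zero => simp
      | succ n =>
        rw [Nat.sum_antidiagonal_succ]
        simp only [fussCatalan_succ_succ hm, add_mul, sum_add_distrib]
        rw [ihn n n.lt_succ_self (r + m), show r + 1 + s = r + s + 1 by ring,
          fussCatalan_succ_succ hm, ← ihr, Nat.sum_antidiagonal_succ,
          show r + m + s = r + s + m by ring]
        simp only [fussCatalan_zero]
        ring

section PowerSeries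

variable {m : ℕ} {x : ℝ}

lemma sum_antidiagonal_fussCatalan_mul_pow (hm : 0 < m) (x : ℝ) (r s n : ℕ) :
    ∑ p ∈ antidiagonal n, fussCatalan m r p.1 * x ^ p.1 * (fussCatalan m s p.2 * x ^ p.2) =
      fussCatalan m (r + s) n * x ^ n := by
  rw [← sum_antidiagonal_fussCatalan hm, sum_mul]
  refine sum_congr rfl fun p hp => ?_
  rw [← HasAntidiagonal.mem_antidiagonal.1 hp, pow_add]
  ring

lemma fussCatalan_mul_pow_nonneg (m r : ℕ) (hx : 0 ≤ x) : 0 ≤ fun n => fussCatalan m r n * x ^ n :=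
  fun n => mul_nonneg (fussCatalan_nonneg m r n) (pow_nonneg hx n)

lemma sum_range_fussCatalan_add_le (hm : 0 < m) (hx : 0 ≤ x) (r s N : ℕ) :
    ∑ n ∈ range N, fussCatalan m (r + s) n * x ^ n ≤
      (∑ n ∈ range N, fussCatalan m r n * x ^ n) * ∑ n ∈ range N, fussCatalan m s n * x ^ n := by
  simpa only [sum_antidiagonal_fussCatalan_mul_pow hm] using
    sum_range_sum_antidiagonal_le_mul (fussCatalan_mul_pow_nonneg m r hx)
      (fussCatalan_mul_pow_nonneg m s hx) N

lemma sum_range_fussCatalan_le_pow (hm : 0 < m) (hx : 0 ≤ x) (r N : ℕ) :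
    ∑ n ∈ range N, fussCatalan m r n * x ^ n ≤ (∑ n ∈ range N, fussCatalan m 1 n * x ^ n) ^ r := by
  induction r with
  | zero => cases N <;> simp [sum_range_succ']
  | succ r ih =>
    rw [pow_succ]
    exact (sum_range_fussCatalan_add_le hm hx r 1 N).trans <| mul_le_mul_of_nonneg_right ih <|
      sum_nonneg fun n _ => fussCatalan_mul_pow_nonneg m 1 hx n

lemma sum_range_succ_fussCatalan_one (hm : 0 < m) (x : ℝ) (N : ℕ) :
    ∑ n ∈ range (N + 1), fussCatalan m 1 n * x ^ n =
      1 + x * ∑ n ∈ range N, fussCatalan m m n * x ^ n := by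
  rw [sum_range_succ', add_comm, mul_sum]
  simp only [fussCatalan_one_succ hm, fussCatalan_zero, pow_zero, mul_one, pow_succ]
  exact congrArg _ (sum_congr rfl fun n _ => by ring)

lemma hasSum_fussCatalan_pow (hm : 0 < m) (hx : 0 ≤ x)
    (hsum : Summable fun n => fussCatalan m 1 n * x ^ n) (r : ℕ) :
    HasSum (fun n => fussCatalan m r n * x ^ n) ((∑' n, fussCatalan m 1 n * x ^ n) ^ r) := by
  induction r with
  | zero =>
    rw [pow_zero]
    convert hasSum_ite_eq 0 (1 : ℝ) with n
    cases n <;> simp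
  | succ r ih =>
    have hprod := ih.summable.mul_of_nonneg hsum (fussCatalan_mul_pow_nonneg m r hx)
      (fussCatalan_mul_pow_nonneg m 1 hx)
    rw [pow_succ, ← ih.tsum_eq, ih.summable.tsum_mul_tsum_eq_tsum_sum_antidiagonal hsum hprod]
    have hconv := (summable_sum_mul_antidiagonal_of_summable_mul
      (f := fun n => fussCatalan m r n * x ^ n) (g := fun n => fussCatalan m 1 n * x ^ n)
      hprod).hasSum
    simp only [sum_antidiagonal_fussCatalan_mul_pow hm] at hconv ⊢
    exact hconv

lemma tsum_fussCatalan_one_eq (hm : 0 < m) (hx : 0 ≤ x)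
    (hsum : Summable fun n => fussCatalan m 1 n * x ^ n) :
    ∑' n, fussCatalan m 1 n * x ^ n = 1 + x * (∑' n, fussCatalan m 1 n * x ^ n) ^ m := by
  have htail : HasSum (fun n => fussCatalan m 1 (n + 1) * x ^ (n + 1))
      (x * (∑' n, fussCatalan m 1 n * x ^ n) ^ m) := by
    refine ((hasSum_fussCatalan_pow hm hx hsum m).mul_left x).congr_fun fun n => ?_
    rw [fussCatalan_one_succ hm, pow_succ]
    ring
  simpa using (htail.zero_add (f := fun n => fussCatalan m 1 n * x ^ n)).tsum_eq

end PowerSeries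

-- The radius of convergence of `B` for `m = d + 1`.
noncomputable def fussCatalanRadius (d : ℕ) : ℝ := d ^ d / (d + 1) ^ (d + 1)

section Radius

variable {d : ℕ}

lemma fussCatalanRadius_nonneg (d : ℕ) : 0 ≤ fussCatalanRadius d := by
  unfold fussCatalanRadius; positivity

lemma fussCatalanRadius_mul_pow (hd : 0 < d) :
    fussCatalanRadius d * ((d + 1) / d) ^ (d + 1) = 1 / d := by
  rw [fussCatalanRadius, div_pow, pow_succ (d : ℝ) d]
  field_simp

lemma sum_range_fussCatalan_radius_le (hd : 0 < d) (N : ℕ) :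
    ∑ n ∈ range N, fussCatalan (d + 1) 1 n * fussCatalanRadius d ^ n ≤ (d + 1) / d := by
  induction N with
  | zero => simp only [sum_range_zero]; positivity
  | succ N ih =>
    have hS := sum_nonneg fun n (_ : n ∈ range N) =>
      fussCatalan_mul_pow_nonneg (d + 1) 1 (fussCatalanRadius_nonneg d) n
    calc _ = 1 + fussCatalanRadius d *
            ∑ n ∈ range N, fussCatalan (d + 1) (d + 1) n * fussCatalanRadius d ^ n :=
          sum_range_succ_fussCatalan_one d.succ_pos _ N
      _ ≤ 1 + fussCatalanRadius d * ((d + 1) / d) ^ (d + 1) := by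
          gcongr
          · exact fussCatalanRadius_nonneg d
          · exact (sum_range_fussCatalan_le_pow d.succ_pos (fussCatalanRadius_nonneg d) _ N).trans
              (pow_le_pow_left₀ hS ih _)
      _ = (d + 1) / d := by
          rw [fussCatalanRadius_mul_pow hd]
          field_simp

-- With `y = (d + 1) / d · (1 + s)` the equation reads `(1 + s) ^ (d + 1) = 1 + (d + 1) s`, the
-- equality case of Bernoulli's inequality.
lemma eq_of_one_add_fussCatalanRadius_mul_pow_eq (hd : 0 < d) {y : ℝ} (hy : 0 ≤ y)
    (h : 1 + fussCatalanRadius d * y ^ (d + 1) = y) : y = (d + 1) / d := by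
  set s := y * d / (d + 1) - 1 with hs_def
  have hys : y = (d + 1) / d * (1 + s) := by rw [hs_def]; field_simp; ring
  have hs₁ : -1 ≤ s := by rw [hs_def, neg_le_sub_iff_le_add, le_add_iff_nonneg_left]; positivity
  by_contra hne
  have hs : s ≠ 0 := fun hs => hne (by simpa [hs] using hys)
  have hbern := one_add_mul_self_lt_rpow_one_add hs₁ hs
    (by exact_mod_cast Nat.lt_add_of_pos_left hd : (1 : ℝ) < (d + 1 : ℕ))
  rw [Real.rpow_natCast] at hbern
  rw [hys, mul_pow, ← mul_assoc, fussCatalanRadius_mul_pow hd] at h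
  push_cast at hbern
  field_simp at h
  linarith

theorem hasSum_fussCatalan_radius (hd : 0 < d) :
    HasSum (fun n => fussCatalan (d + 1) 1 n * fussCatalanRadius d ^ n) ((d + 1) / d) := by
  have hρ := fussCatalanRadius_nonneg d
  have hsum : Summable fun n => fussCatalan (d + 1) 1 n * fussCatalanRadius d ^ n :=
    summable_of_sum_range_le (fussCatalan_mul_pow_nonneg _ 1 hρ)
      (sum_range_fussCatalan_radius_le hd)
  have hfix := (tsum_fussCatalan_one_eq d.succ_pos hρ hsum).symm
  rw [← eq_of_one_add_fussCatalanRadius_mul_pow_eq hd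
    (tsum_nonneg (fussCatalan_mul_pow_nonneg _ 1 hρ)) hfix]
  exact hsum.hasSum

end Radius

lemma pcoef_mul_add_one {d : ℕ} (hd : 0 < d) (n : ℕ) :
    pcoef (d + 1) (d * n + 1) =
      d / (d + 1) * (fussCatalan (d + 1) 1 n * fussCatalanRadius d ^ n) := by
  have hchoose : (((d + 1) * n + 1).choose n : ℝ) / ((d + 1) * n + 1) =
      ((d + 1) * n).choose n / (d * n + 1) := by
    rw [div_eq_div_iff (by positivity) (by positivity)]
    have h := Nat.choose_mul_succ_eq ((d + 1) * n) n
    rw [show (d + 1) * n + 1 - n = d * n + 1 by rw [add_mul, one_mul]; omega] at h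
    exact_mod_cast h.symm
  simp only [pcoef, Nat.add_sub_cancel, dvd_mul_right, if_true, Nat.mul_div_cancel_left n hd]
  rw [fussCatalan_of_pos one_pos, fussCatalanRadius]
  push_cast
  rw [one_div_mul_eq_div ((d + 1) * n + 1 : ℝ), hchoose, add_sub_cancel_right]
  -- keeps `ring` from expanding `(d + 1) ^ (d + 1)`
  generalize (d : ℝ) + 1 = b
  ring

lemma pcoef_add_one_of_not_dvd {d j : ℕ} (h : ¬ d ∣ j) : pcoef (d + 1) (j + 1) = 0 := by
  simp [pcoef, h]

/-- The limiting stationary cluster size distribution is a probability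
distribution: `∑_{k≥1} p_k = 1` (index shifted: `k = j + 1`). -/
theorem pcoef_sums_to_one (m : ℕ) (hm : 2 ≤ m) :
    ∑' j : ℕ, pcoef m (j + 1) = 1 := by
  obtain ⟨d, rfl⟩ : ∃ d, m = d + 1 := ⟨m - 1, by omega⟩
  have hd : 0 < d := by omega
  have hsub : HasSum (fun n => pcoef (d + 1) (d * n + 1)) 1 := by
    have h := (hasSum_fussCatalan_radius hd).mul_left ((d : ℝ) / (d + 1))
    rw [div_mul_div_cancel₀' (by positivity : (d : ℝ) ≠ 0), div_self (by positivity)] at h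
    simpa only [pcoef_mul_add_one hd]
  refine (((mul_right_injective₀ hd.ne').hasSum_iff
    (f := fun j => pcoef (d + 1) (j + 1)) fun j hj => ?_).1 hsub).tsum_eq
  exact pcoef_add_one_of_not_dvd fun ⟨n, hn⟩ => hj ⟨n, hn.symm⟩
end
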